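/- arXiv:1701.07489 — 3 statements merged into one kernel-verified Lean document; each statement's English description precedes it below -/
import Mathlib

section
/- (Theorem 2, sign-free form.) Assume h_{ab} ≠ 0 for all 1 ≤ a < b ≤ 5 and F_{ik}F_{jl} − F_{il}F_{jk} ≠ 0 for every permutation (i,j,k,l,m) of (1,…,5). Then for every permutation (i,j,k,l,m) of (1,…,5) and every choice of square roots q (q_s² = ω_s for all 3-element subsets s), one has H(i,j,k,l,m)² = 1/∏_{1≤a<b≤5} h_{ab}. In particular, the square of the paper's quantity H_u of formula (Hu) is one and the same for all pairs (oriented edge b = ij) ⊂ (tetrahedron t = ijkl) of the pentachoron u. -/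
noncomputable section

/-- The remaining fifth vertex of the pentachoron `{0,1,2,3,4}` (vertices `1,…,5` of the
paper, shifted to `Fin 5`), given four pairwise distinct vertices `i, j, k, l`. -/
def fifth (i j k l : Fin 5) : Fin 5 :=
  ⟨(10 - ((i : ℕ) + j + k + l)) % 5, Nat.mod_lt _ (by norm_num)⟩

/-- The edge-operator coefficient `β̃(i,j;k,l) = F_{ik}F_{jl} − F_{il}F_{jk}`. -/
def betaT (F : Fin 5 → Fin 5 → ℂ) (i j k l : Fin 5) : ℂ :=
  F i k * F j l - F i l * F j k

/-- The edge-operator coefficient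
`γ̃(i,j;k,l) = F_{ik}F_{jm}F_{lm} − F_{im}F_{jk}F_{lm} − F_{il}F_{jm}F_{km} + F_{im}F_{jl}F_{km}`,
where `m` is the remaining fifth vertex. -/
def gammaT (F : Fin 5 → Fin 5 → ℂ) (i j k l : Fin 5) : ℂ :=
  F i k * F j (fifth i j k l) * F l (fifth i j k l)
    - F i (fifth i j k l) * F j k * F l (fifth i j k l)
    - F i l * F j (fifth i j k l) * F k (fifth i j k l)
    + F i (fifth i j k l) * F j l * F k (fifth i j k l)

/-- Formula (pf) of the paper, with normalization `p = 1`: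
`h(i,j | k,l) := β̃(k,i;j,l)·γ̃(k,j;l,i) + β̃(k,j;l,i)·γ̃(k,i;j,l)`. -/
def hpair (F : Fin 5 → Fin 5 → ℂ) (i j k l : Fin 5) : ℂ :=
  betaT F k i j l * gammaT F k j l i + betaT F k j l i * gammaT F k i j l

/-- The edge coefficient `h_{ab}` of the unordered edge `{a,b}`: for `a < b` it is
`h(a,b | c,d)` where `c < d` are the two smallest elements of the complement of `{a,b}`,
and `h_{ba} := h_{ab}`. -/
def hEdge (F : Fin 5 → Fin 5 → ℂ) (a b : Fin 5) : ℂ :=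
  hpair F (min a b) (max a b)
    (Finset.sort ((Finset.univ : Finset (Fin 5)) \ {a, b}) (· ≤ ·)).headI
    (Finset.sort ((Finset.univ : Finset (Fin 5)) \ {a, b}) (· ≤ ·)).tail.headI

/-- Formula (ph) with `p = 1`: `ω_{abc} := 1/(h_{ab}·h_{ac}·h_{bc})`. -/
def omegaC (F : Fin 5 → Fin 5 → ℂ) (a b c : Fin 5) : ℂ :=
  1 / (hEdge F a b * hEdge F a c * hEdge F b c)

/-- The quantity `H_u` of formula (Hu), for the pair: oriented edge `b = ij` inside the
tetrahedron `t = ijkl` of the pentachoron `u = ijklm`; `q` assigns a square root of `ω_s`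
to every 3-element subset `s`:
`H(i,j,k,l,m) = h_{ij}·β̃(i,j;k,l)·q_{ijk}q_{ijl}q_{ijm}q_{klm}/(F_{ik}F_{jl} − F_{il}F_{jk})`. -/
def Hu (F : Fin 5 → Fin 5 → ℂ) (q : Finset (Fin 5) → ℂ) (i j k l m : Fin 5) : ℂ :=
  hEdge F i j * betaT F i j k l * q {i, j, k} * q {i, j, l} * q {i, j, m} * q {k, l, m}
    / (F i k * F j l - F i l * F j k)

/-!
Since the denominator of `Hu` is `β̃(i,j;k,l)` itself, `H² = h_{ij}² ω_{ijk} ω_{ijl} ω_{ijm} ω_{klm}`.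
The four triangles `ijk, ijl, ijm, klm` contain every edge of the pentachoron exactly once, except
`ij`, which they contain three times, and the factor `h_{ij}²` cancels the two extra occurrences.
Because `h_{ab}` is symmetric, the product over all edges does not depend on the labelling of the
vertices, so it suffices to check this for the vertex order `0, …, 4`.
-/

open Finset

theorem prod_filter_not_isDiag_map_perm {α M : Type*} [Fintype α] [DecidableEq α] [CommMonoid M]
    (f : Sym2 α → M) (σ : Equiv.Perm α) :
    ∏ z ∈ univ.filter (fun z : Sym2 α => ¬ z.IsDiag), f (z.map σ)
      = ∏ z ∈ univ.filter (fun z : Sym2 α => ¬ z.IsDiag), f z := by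
  refine prod_nbij' (Sym2.map σ) (Sym2.map σ.symm) ?_ ?_ ?_ ?_ (fun _ _ => rfl)
  all_goals simp [Sym2.isDiag_map σ.injective, Sym2.isDiag_map σ.symm.injective, Sym2.map_map]

section PairProducts

variable {α M : Type*} [Fintype α] [LinearOrder α] [CommMonoid M]

theorem prod_filter_lt_eq_prod_filter_not_isDiag (f : Sym2 α → M) :
    ∏ p ∈ univ.filter (fun p : α × α => p.1 < p.2), f s(p.1, p.2)
      = ∏ z ∈ univ.filter (fun z : Sym2 α => ¬ z.IsDiag), f z := by
  refine prod_nbij' (fun p => s(p.1, p.2)) (fun z => (z.inf, z.sup)) ?_ ?_ ?_ ?_ ?_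
  · intro p hp
    simpa using (mem_filter.mp hp).2.ne
  · intro z hz
    induction z with | _ a b
    simp only [mem_filter, mem_univ, true_and, Sym2.mk_isDiag_iff] at hz ⊢
    simpa [eq_comm] using hz
  · intro p hp
    have := (mem_filter.mp hp).2
    simp [this.le]
  · intro z _
    induction z with | _ a b
    rcases le_total a b with h | h <;> simp [h, Sym2.eq_swap]
  · intro p _
    rfl

theorem prod_filter_lt_comp_perm (g : α → α → M) (hg : ∀ a b, g a b = g b a)
    (σ : Equiv.Perm α) :
    ∏ p ∈ univ.filter (fun p : α × α => p.1 < p.2), g (σ p.1) (σ p.2)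
      = ∏ p ∈ univ.filter (fun p : α × α => p.1 < p.2), g p.1 p.2 := by
  simpa only [← prod_filter_lt_eq_prod_filter_not_isDiag, Sym2.map_mk, Sym2.lift_mk] using
    prod_filter_not_isDiag_map_perm (Sym2.lift ⟨g, hg⟩) σ

end PairProducts

theorem sq_mul_inv_pow_three {G : Type*} [GroupWithZero G] (a : G) : a ^ 2 * a⁻¹ ^ 3 = a⁻¹ := by
  rcases eq_or_ne a 0 with rfl | ha
  · simp
  · rw [pow_succ a⁻¹, ← mul_assoc, inv_pow, mul_inv_cancel₀ (pow_ne_zero 2 ha), one_mul]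

theorem prod_pairs_fin_five {M : Type*} [CommMonoid M] (g : Fin 5 × Fin 5 → M) :
    ∏ p ∈ univ.filter (fun p : Fin 5 × Fin 5 => p.1 < p.2), g p
      = g (0, 1) * g (0, 2) * g (0, 3) * g (0, 4) * g (1, 2) * g (1, 3) * g (1, 4)
        * g (2, 3) * g (2, 4) * g (3, 4) := by
  have hS : univ.filter (fun p : Fin 5 × Fin 5 => p.1 < p.2)
      = {(0, 1), (0, 2), (0, 3), (0, 4), (1, 2), (1, 3), (1, 4), (2, 3), (2, 4), (3, 4)} := by
    decide
  rw [hS]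
  simp [prod_insert, mul_assoc]

theorem sq_mul_omega_eq_inv_prod {K : Type*} [Field K] (h : Fin 5 → Fin 5 → K) :
    h 0 1 ^ 2 * (1 / (h 0 1 * h 0 2 * h 1 2)) * (1 / (h 0 1 * h 0 3 * h 1 3))
        * (1 / (h 0 1 * h 0 4 * h 1 4)) * (1 / (h 2 3 * h 2 4 * h 3 4))
      = 1 / ∏ p ∈ univ.filter (fun p : Fin 5 × Fin 5 => p.1 < p.2), h p.1 p.2 := by
  rw [prod_pairs_fin_five]
  simp only [one_div, mul_inv]
  linear_combination (h 0 2 * h 1 2 * h 0 3 * h 1 3 * h 0 4 * h 1 4 * h 2 3 * h 2 4 * h 3 4)⁻¹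
    * sq_mul_inv_pow_three (h 0 1)

theorem hEdge_comm (F : Fin 5 → Fin 5 → ℂ) (a b : Fin 5) : hEdge F a b = hEdge F b a := by
  simp [hEdge, min_comm, max_comm, Finset.pair_comm]

theorem Hu_eq_of_betaT_ne_zero (F : Fin 5 → Fin 5 → ℂ) (q : Finset (Fin 5) → ℂ)
    {i j k l : Fin 5} (m : Fin 5) (hβ : betaT F i j k l ≠ 0) :
    Hu F q i j k l m = hEdge F i j * (q {i, j, k} * q {i, j, l} * q {i, j, m} * q {k, l, m}) := by
  rw [Hu, ← betaT]
  field_simp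

theorem Hu_sq_eq_general (F : Fin 5 → Fin 5 → ℂ)
    (hbeta : ∀ σ : Equiv.Perm (Fin 5),
      F (σ 0) (σ 2) * F (σ 1) (σ 3) - F (σ 0) (σ 3) * F (σ 1) (σ 2) ≠ 0)
    (q : Finset (Fin 5) → ℂ)
    (hq : ∀ a b c : Fin 5, a ≠ b → a ≠ c → b ≠ c → (q {a, b, c}) ^ 2 = omegaC F a b c)
    (σ : Equiv.Perm (Fin 5)) :
    (Hu F q (σ 0) (σ 1) (σ 2) (σ 3) (σ 4)) ^ 2
      = 1 / ∏ p ∈ Finset.univ.filter (fun p : Fin 5 × Fin 5 => p.1 < p.2),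
            hEdge F p.1 p.2 := by
  have hσ : ∀ a b : Fin 5, a ≠ b → σ a ≠ σ b := fun _ _ => σ.injective.ne
  rw [Hu_eq_of_betaT_ne_zero F q _ (hbeta σ), mul_pow, mul_pow, mul_pow, mul_pow,
    hq _ _ _ (hσ 0 1 (by decide)) (hσ 0 2 (by decide)) (hσ 1 2 (by decide)),
    hq _ _ _ (hσ 0 1 (by decide)) (hσ 0 3 (by decide)) (hσ 1 3 (by decide)),
    hq _ _ _ (hσ 0 1 (by decide)) (hσ 0 4 (by decide)) (hσ 1 4 (by decide)),
    hq _ _ _ (hσ 2 3 (by decide)) (hσ 2 4 (by decide)) (hσ 3 4 (by decide)),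
    ← prod_filter_lt_comp_perm (hEdge F) (hEdge_comm F) σ, ← mul_assoc, ← mul_assoc, ← mul_assoc]
  exact sq_mul_omega_eq_inv_prod (fun a b => hEdge F (σ a) (σ b))

/-- Theorem 2, sign-free form: if all `h_{ab} ≠ 0` and all
`β̃(i,j;k,l) = F_{ik}F_{jl} − F_{il}F_{jk} ≠ 0` for permutations `(i,j,k,l,m)` of the
vertices, then for every permutation and every choice of square roots `q` of the cocycle
values `ω`, the square of `H_u` equals `1/∏_{a<b} h_{ab}`. -/
theorem Hu_sq_eq (F : Fin 5 → Fin 5 → ℂ) (hF : ∀ a b, F a b = - F b a)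
    (hh : ∀ a b : Fin 5, a < b → hEdge F a b ≠ 0)
    (hbeta : ∀ σ : Equiv.Perm (Fin 5),
      F (σ 0) (σ 2) * F (σ 1) (σ 3) - F (σ 0) (σ 3) * F (σ 1) (σ 2) ≠ 0)
    (q : Finset (Fin 5) → ℂ)
    (hq : ∀ a b c : Fin 5, a ≠ b → a ≠ c → b ≠ c → (q {a, b, c}) ^ 2 = omegaC F a b c)
    (σ : Equiv.Perm (Fin 5)) :
    (Hu F q (σ 0) (σ 1) (σ 2) (σ 3) (σ 4)) ^ 2
      = 1 / ∏ p ∈ Finset.univ.filter (fun p : Fin 5 × Fin 5 => p.1 < p.2),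
            hEdge F p.1 p.2 :=
  Hu_sq_eq_general F hbeta q hq σ
end
end

section
/- (Theorem 2.) Assume h_{ab} ≠ 0 for all 1 ≤ a < b ≤ 5 and F_{ik}F_{jl} − F_{il}F_{jk} ≠ 0 for every permutation (i,j,k,l,m) of (1,…,5). Then there exists a choice of square roots q (a complex number q_s with q_s² = ω_s for every 3-element subset s of {1,…,5}) such that H(i,j,k,l,m) takes one and the same value for all permutations (i,j,k,l,m) of (1,…,5); that is, with this choice the quantity H_u of formula (Hu) is the same for all pairs (oriented edge b = ij) ⊂ (tetrahedron t = ijkl) and thus belongs only to the pentachoron u itself (its common value is the square η_u² of the paper's factor η_u). -/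
noncomputable section

/-!
Fix a square root `g_e` of `h_e` for every edge `e` of the pentachoron and take
`q_s := ∏_{e ⊂ s} g_e⁻¹`, a square root of `ω_s`. In `H(i,j,k,l,m)` the factor `β̃(i,j;k,l)`
cancels against the denominator, and the four triangles `ijk, ijl, ijm, klm` contain the edge
`ij` three times and each of the other nine edges once, so
`h_{ij} q_{ijk} q_{ijl} q_{ijm} q_{klm} = g_{ij}² g_{ij}⁻³ ∏_{e ≠ ij} g_e⁻¹ = ∏_e g_e⁻¹`,
which does not depend on the permutation.
-/

open Finset

section EdgeProduct

variable {α M : Type*} [DecidableEq α] [CommMonoid M]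

def edgeProd (g : Sym2 α → M) (s : Finset α) : M :=
  ∏ e ∈ s.sym2 with ¬e.IsDiag, g e

theorem edgeProd_insert (g : Sym2 α → M) {a : α} {s : Finset α} (ha : a ∉ s) :
    edgeProd g (insert a s) = (∏ b ∈ s, g s(a, b)) * edgeProd g s := by
  have hnondiag : {b ∈ s.cons a ha | ¬s(a, b).IsDiag} = s := by
    ext b
    simp only [mem_filter, mem_cons, Sym2.mk_isDiag_iff]
    grind
  rw [edgeProd, edgeProd, ← cons_eq_insert a s ha, sym2_cons, filter_disjUnion, prod_disjUnion,
    filter_map, prod_map]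
  simp only [Function.comp_def, Sym2.mkEmbedding_apply, hnondiag]

theorem edgeProd_singleton (g : Sym2 α → M) (a : α) : edgeProd g {a} = 1 := by
  simp [edgeProd, sym2_singleton, filter_singleton]

theorem edgeProd_triple (g : Sym2 α → M) {a b c : α} (hab : a ≠ b) (hac : a ≠ c) (hbc : b ≠ c) :
    edgeProd g {a, b, c} = g s(a, b) * g s(a, c) * g s(b, c) := by
  rw [edgeProd_insert g (by simp [hab, hac]), edgeProd_insert g (by simpa using hbc),
    edgeProd_singleton, prod_pair hbc, prod_singleton, mul_one, mul_assoc]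

theorem edgeProd_univ_perm (g : Sym2 (Fin 5) → M) (σ : Equiv.Perm (Fin 5)) :
    edgeProd g univ = g s(σ 0, σ 1) * g s(σ 0, σ 2) * g s(σ 0, σ 3) * g s(σ 0, σ 4) *
      (g s(σ 1, σ 2) * g s(σ 1, σ 3) * g s(σ 1, σ 4)) * (g s(σ 2, σ 3) * g s(σ 2, σ 4)) *
      g s(σ 3, σ 4) := by
  have huniv : (univ : Finset (Fin 5)) = {σ 0, σ 1, σ 2, σ 3, σ 4} := by
    ext x
    obtain ⟨y, rfl⟩ := σ.surjective x
    fin_cases y <;> simp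
  rw [huniv]
  simp only [mem_insert, mem_singleton, σ.injective.eq_iff, Fin.reduceEq, zero_ne_one, or_self,
    not_false_eq_true, edgeProd_insert, prod_insert, prod_singleton, edgeProd_singleton, mul_one]
  ac_rfl

end EdgeProduct

theorem sq_mul_inv_pow_three_mul {K : Type*} [Field K] (g R : K) :
    g ^ 2 * (g ^ 3 * R)⁻¹ = (g * R)⁻¹ := by
  rcases eq_or_ne g 0 with rfl | hg
  · simp
  · field_simp

def edgeRoot (F : Fin 5 → Fin 5 → ℂ) : Sym2 (Fin 5) → ℂ :=
  Sym2.lift ⟨fun a b => hEdge F a b ^ (2⁻¹ : ℂ),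
    fun a b => congrArg (· ^ (2⁻¹ : ℂ)) (hEdge_comm F a b)⟩

theorem edgeRoot_sq (F : Fin 5 → Fin 5 → ℂ) (a b : Fin 5) :
    edgeRoot F s(a, b) ^ 2 = hEdge F a b := by
  simp [edgeRoot]

theorem Hu_eq_inv_edgeProd (F : Fin 5 → Fin 5 → ℂ) (σ : Equiv.Perm (Fin 5))
    (hβ : F (σ 0) (σ 2) * F (σ 1) (σ 3) - F (σ 0) (σ 3) * F (σ 1) (σ 2) ≠ 0) :
    Hu F (fun s => (edgeProd (edgeRoot F) s)⁻¹) (σ 0) (σ 1) (σ 2) (σ 3) (σ 4) =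
      (edgeProd (edgeRoot F) univ)⁻¹ := by
  have hσ {x y : Fin 5} (h : x ≠ y) : σ x ≠ σ y := σ.injective.ne h
  rw [Hu, betaT, ← edgeRoot_sq F, edgeProd_univ_perm _ σ,
    edgeProd_triple _ (hσ (by decide)) (hσ (by decide)) (hσ (by decide)),
    edgeProd_triple _ (hσ (by decide)) (hσ (by decide)) (hσ (by decide)),
    edgeProd_triple _ (hσ (by decide)) (hσ (by decide)) (hσ (by decide)),
    edgeProd_triple _ (hσ (by decide)) (hσ (by decide)) (hσ (by decide))]
  set β := F (σ 0) (σ 2) * F (σ 1) (σ 3) - F (σ 0) (σ 3) * F (σ 1) (σ 2)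
  set g := edgeRoot F
  set R := g s(σ 0, σ 2) * g s(σ 0, σ 3) * g s(σ 0, σ 4) * g s(σ 1, σ 2) * g s(σ 1, σ 3) *
    g s(σ 1, σ 4) * g s(σ 2, σ 3) * g s(σ 2, σ 4) * g s(σ 3, σ 4)
  calc _ = g s(σ 0, σ 1) ^ 2 * (g s(σ 0, σ 1) ^ 3 * R)⁻¹ * (β / β) := by ring
    _ = _ := by rw [sq_mul_inv_pow_three_mul, div_self hβ, mul_one]; ring

theorem Hu_well_defined_general (F : Fin 5 → Fin 5 → ℂ)
    (hbeta : ∀ σ : Equiv.Perm (Fin 5),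
      F (σ 0) (σ 2) * F (σ 1) (σ 3) - F (σ 0) (σ 3) * F (σ 1) (σ 2) ≠ 0) :
    ∃ q : Finset (Fin 5) → ℂ,
      (∀ a b c : Fin 5, a ≠ b → a ≠ c → b ≠ c → (q {a, b, c}) ^ 2 = omegaC F a b c) ∧
      ∃ ηsq : ℂ, ∀ σ : Equiv.Perm (Fin 5),
        Hu F q (σ 0) (σ 1) (σ 2) (σ 3) (σ 4) = ηsq := by
  refine ⟨fun s => (edgeProd (edgeRoot F) s)⁻¹, fun a b c hab hac hbc => ?_,
    (edgeProd (edgeRoot F) univ)⁻¹, fun σ => Hu_eq_inv_edgeProd F σ (hbeta σ)⟩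
  dsimp only
  rw [edgeProd_triple _ hab hac hbc, omegaC, one_div, inv_pow, mul_pow, mul_pow,
    edgeRoot_sq, edgeRoot_sq, edgeRoot_sq]

/-- Theorem 2: if all `h_{ab} ≠ 0` and all
`F_{ik}F_{jl} − F_{il}F_{jk} ≠ 0` for permutations `(i,j,k,l,m)` of the vertices, then
there is a choice of square roots `q` (with `q_s² = ω_s` for every 3-element subset `s`)
such that `H(i,j,k,l,m)` takes one and the same value for all permutations `(i,j,k,l,m)`;
this common value is the square `η_u²` of the paper's factor `η_u`. -/
theorem Hu_well_defined (F : Fin 5 → Fin 5 → ℂ) (hF : ∀ a b, F a b = - F b a)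
    (hh : ∀ a b : Fin 5, a < b → hEdge F a b ≠ 0)
    (hbeta : ∀ σ : Equiv.Perm (Fin 5),
      F (σ 0) (σ 2) * F (σ 1) (σ 3) - F (σ 0) (σ 3) * F (σ 1) (σ 2) ≠ 0) :
    ∃ q : Finset (Fin 5) → ℂ,
      (∀ a b c : Fin 5, a ≠ b → a ≠ c → b ≠ c → (q {a, b, c}) ^ 2 = omegaC F a b c) ∧
      ∃ ηsq : ℂ, ∀ σ : Equiv.Perm (Fin 5),
        Hu F q (σ 0) (σ 1) (σ 2) (σ 3) (σ 4) = ηsq :=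
  Hu_well_defined_general F hbeta
end
end

section
/- (Algebraic core of Theorem 5, sign-free form.) Let m be the 3×3 complex matrix m := [[h₁₂·β̃(1,2;3,4), h₁₂·β̃(1,2;3,5), h₁₂·β̃(1,2;4,5)], [h₁₃·β̃(1,3;4,2), h₁₃·β̃(1,3;5,2), 0], [h₁₄·β̃(1,4;2,3), 0, h₁₄·β̃(1,4;5,2)]]; this is the matrix of the coefficients β_{bt} = h_b·β̃_{bt} of the differentiations ∂_{1234}, ∂_{1235}, ∂_{1245} in the edge operators d₁₂, d₁₃, d₁₄ (the paper's matrix m for the second move 0–2, with the pentachoron 13456 relabelled as 12345, so that the new vertex is 1 and the inflated tetrahedron is 2345). Then (det m)² = (h₁₂·h₁₃·h₁₄·h₁₅·F₁₂)², where F₁₂ is the entry of F between the facets {2,3,4,5} and {1,3,4,5}. (This is the squared, sign-free content of Theorem 5 combined with the evaluation (Psi*): up to sign, −det m/F₁₂ equals η_u² divided by the product of q_s over the six new 2-faces containing the new vertex.) -/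
noncomputable section

/-! The matrix `m` is `diag(h₁₂, h₁₃, h₁₄)` times the matrix of the `β̃`'s, and under
skew-symmetry of `F` the determinant of the latter is the polynomial identity
`det β̃ = h₁₅ · F₁₂`. So already `det m = h₁₂ h₁₃ h₁₄ h₁₅ F₁₂`, before squaring. -/

lemma sort_univ_sdiff_zero_four :
    Finset.sort ((Finset.univ : Finset (Fin 5)) \ {0, 4}) (· ≤ ·) = [1, 2, 3] := by
  refine List.Perm.eq_of_pairwise' (Finset.pairwise_sort _ _) (by decide)
    (Multiset.coe_eq_coe.mp ?_)
  rw [Finset.sort_eq]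
  decide

lemma hEdge_zero_four (F : Fin 5 → Fin 5 → ℂ) : hEdge F 0 4 = hpair F 0 4 1 2 := by
  rw [hEdge, sort_univ_sdiff_zero_four]
  rfl

def betaMatrix (F : Fin 5 → Fin 5 → ℂ) : Matrix (Fin 3) (Fin 3) ℂ :=
  !![betaT F 0 1 2 3, betaT F 0 1 2 4, betaT F 0 1 3 4;
     betaT F 0 2 3 1, betaT F 0 2 4 1, 0;
     betaT F 0 3 1 2, 0, betaT F 0 3 4 1]

lemma det_betaMatrix (F : Fin 5 → Fin 5 → ℂ) (hF : ∀ a b, F a b = - F b a) :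
    (betaMatrix F).det = hpair F 0 4 1 2 * F 0 1 := by
  have hfifth : fifth 1 4 2 0 = 3 ∧ fifth 1 0 4 2 = 3 := by decide
  simp only [betaMatrix, Matrix.det_fin_three, Matrix.of_apply, Matrix.cons_val',
    Matrix.cons_val_zero, Matrix.cons_val_fin_one, Matrix.cons_val_one, Matrix.cons_val,
    mul_zero, sub_zero, zero_mul, add_zero, hpair, betaT, gammaT, hfifth,
    hF 1 0, hF 2 1, hF 3 1, hF 3 2, hF 4 0, hF 4 2, hF 4 3]
  ring

/-- algebraic core of Theorem 5, sign-free form. Vertices `1,…,5` of the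
paper are `0,…,4` of `Fin 5`; `m` is the matrix of the coefficients `β_{bt} = h_b·β̃_{bt}`
of `∂_{1234}, ∂_{1235}, ∂_{1245}` in the edge operators `d₁₂, d₁₃, d₁₄`. Then
`(det m)² = (h₁₂·h₁₃·h₁₄·h₁₅·F₁₂)²`. -/
theorem det_m_sq (F : Fin 5 → Fin 5 → ℂ) (hF : ∀ a b, F a b = - F b a) :
    (Matrix.det
      !![hEdge F 0 1 * betaT F 0 1 2 3, hEdge F 0 1 * betaT F 0 1 2 4,
           hEdge F 0 1 * betaT F 0 1 3 4;
         hEdge F 0 2 * betaT F 0 2 3 1, hEdge F 0 2 * betaT F 0 2 4 1, 0;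
         hEdge F 0 3 * betaT F 0 3 1 2, 0, hEdge F 0 3 * betaT F 0 3 4 1]) ^ 2
      = (hEdge F 0 1 * hEdge F 0 2 * hEdge F 0 3 * hEdge F 0 4 * F 0 1) ^ 2 := by
  congr 1
  have hrows : !![hEdge F 0 1 * betaT F 0 1 2 3, hEdge F 0 1 * betaT F 0 1 2 4,
           hEdge F 0 1 * betaT F 0 1 3 4;
         hEdge F 0 2 * betaT F 0 2 3 1, hEdge F 0 2 * betaT F 0 2 4 1, 0;
         hEdge F 0 3 * betaT F 0 3 1 2, 0, hEdge F 0 3 * betaT F 0 3 4 1]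
      = Matrix.of fun i j => ![hEdge F 0 1, hEdge F 0 2, hEdge F 0 3] i * betaMatrix F i j := by
    ext i j
    fin_cases i <;> fin_cases j <;> simp [betaMatrix]
  rw [hrows, Matrix.det_mul_column, det_betaMatrix F hF, hEdge_zero_four, Fin.prod_univ_three]
  simp only [Matrix.cons_val_zero, Matrix.cons_val_one, Matrix.cons_val]
  ring
end
end
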